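/- Let k ≥ 2 and let ℒ be a metric structure on the wedge of k circles (a k-tuple of positive edge lengths, not necessarily of volume one). Then the limits h'_ℒ = lim_{R→∞} (1/R)·log #{g ∈ CR_k : ℒ(g) ≤ R} and h''_ℒ = lim_{R→∞} (1/R)·log #{w ∈ 𝒞_k : ℓ_ℒ(w) ≤ R} exist, are finite, and h_ℒ = h'_ℒ = h''_ℒ, where h_ℒ is the volume entropy of ℒ. -/

import Mathlib

open Filter Topology
open scoped ENNReal

namespace McShane

/-- The ℒ-weighted length of the freely reduced form of `g`: the sum of `L i`
over all occurrences of `aᵢ^{±1}` in the reduced word of `g`. -/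
noncomputable def wlen {k : ℕ} (L : Fin k → ℝ) (g : FreeGroup (Fin k)) : ℝ :=
  ((FreeGroup.toWord g).map fun x => L x.1).sum

/-- The hyperbolic length of a conjugacy class: the infimum of the ℒ-weighted
lengths of its representatives. For positive edge lengths this equals
`∑ mᵢ·L i` where `mᵢ` counts occurrences of `aᵢ^{±1}` in the cyclically reduced form. -/
noncomputable def hlen {k : ℕ} (L : Fin k → ℝ) (c : ConjClasses (FreeGroup (Fin k))) : ℝ :=
  sInf (wlen L '' c.carrier)

/-- The open simplex `Δ_k` of volume-one metric structures on the wedge of `k` circles. -/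
def simplex (k : ℕ) : Set (Fin k → ℝ) :=
  {L | (∀ i, 0 < L i) ∧ ∑ i, L i = 1}

/-- The barycentric point `ℒ* = (1/k, …, 1/k)`. -/
noncomputable def Lstar (k : ℕ) : Fin k → ℝ := fun _ => 1 / k

/-- `g` is primitive iff it belongs to some free basis of the free group,
equivalently it is the image of a basis element under an automorphism. -/
def IsPrimitive {k : ℕ} (g : FreeGroup (Fin k)) : Prop :=
  ∃ (e : FreeGroup (Fin k) ≃* FreeGroup (Fin k)) (i : Fin k), e (FreeGroup.of i) = g

/-- `C_f(ℒ) = ∑_{w ∈ 𝒞_k} f(ℓ_ℒ(w))`, the sum over all nontrivial conjugacy classes. -/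
noncomputable def Cf {k : ℕ} (f : ℝ → ℝ) (L : Fin k → ℝ) : ℝ≥0∞ :=
  ∑' c : {c : ConjClasses (FreeGroup (Fin k)) // c ≠ 1}, ENNReal.ofReal (f (hlen L c.1))

/-- `P_f(ℒ) = ∑_{w ∈ 𝒫_k} f(ℓ_ℒ(w))`, the sum over conjugacy classes of primitive elements. -/
noncomputable def Pf {k : ℕ} (f : ℝ → ℝ) (L : Fin k → ℝ) : ℝ≥0∞ :=
  ∑' c : {c : ConjClasses (FreeGroup (Fin k)) // ∃ g, IsPrimitive g ∧ ConjClasses.mk g = c},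
    ENNReal.ofReal (f (hlen L c.1))

/-- `g` is cyclically reduced: the first and last letters of its reduced word
are not inverse to each other. -/
def IsCyclicallyReduced {k : ℕ} (g : FreeGroup (Fin k)) : Prop :=
  ∀ x ∈ g.toWord.head?, ∀ y ∈ g.toWord.getLast?, ¬(x.1 = y.1 ∧ x.2 = !y.2)

end McShane

/-!
Write `ε` for the shortest edge. Every `g` extends to the cyclically reduced element `ℓ g ℓ`,
where the letter `ℓ ∈ {a₁, a₁⁻¹, a₂}` cancels with neither end of `g`; this is injective and adds
at most `2 ∑ ℒ(aᵢ)` to the length, so `#F(R - C) ≤ #CR(R) ≤ #F(R)`. A nontrivial conjugacy class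
of length `≤ R` has a representative of length `< R + 1`, so `#𝒞(R) ≤ #F(R + 1)`. Conversely,
conjugating a cyclically reduced word one letter at a time shows that its cyclically reduced
conjugates are its cyclic permutations, at most `R / ε + 1` of them, so
`#CR(R) ≤ (R / ε + 1)(#𝒞(R) + 1)`. Polynomial factors and bounded shifts of `R` do not change
`lim (log #(R)) / R`.
-/

theorem List.length_cyclicPermutations_le {α : Type*} (l : List α) :
    l.cyclicPermutations.length ≤ l.length + 1 := by
  cases l <;> simp

namespace FreeGroup

variable {α : Type*} {L : List (α × Bool)}

theorem isCyclicallyReduced_iff_isReduced_append_self :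
    IsCyclicallyReduced L ↔ IsReduced (L ++ L) := by
  rw [IsCyclicallyReduced, IsReduced, IsReduced, List.isChain_append]
  tauto

theorem IsCyclicallyReduced.rotate (h : IsCyclicallyReduced L) (n : ℕ) :
    IsCyclicallyReduced (L.rotate n) := by
  rcases eq_or_ne L [] with rfl | hL
  · simp
  rw [isCyclicallyReduced_iff_isReduced_append_self] at h ⊢
  rw [List.rotate_eq_drop_append_take_mod]
  refine (h.append_overlap h hL).infix ⟨L.take (n % L.length), L.drop (n % L.length), ?_⟩
  conv_rhs => rw [← List.take_append_drop (n % L.length) L]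
  simp only [List.append_assoc]

theorem IsCyclicallyReduced.of_isRotated {L' : List (α × Bool)}
    (h : IsCyclicallyReduced L) (hr : L ~r L') : IsCyclicallyReduced L' := by
  obtain ⟨n, rfl⟩ := hr
  exact h.rotate n

theorem mk_singleton_inv (x : α × Bool) : (mk [x])⁻¹ = mk [(x.1, !x.2)] := by
  simp [inv_mk, invRev]

theorem isReduced_cons_append_singleton {x y : α × Bool} (hL : IsReduced L) (hne : L ≠ [])
    (hx : L.head? ≠ some (x.1, !x.2)) (hy : L.getLast? ≠ some (y.1, !y.2)) :
    IsReduced (x :: L ++ [y]) := by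
  refine IsReduced.append_overlap (L₁ := [x]) ?_ ?_ hne
  · rw [IsReduced, List.isChain_append]
    refine ⟨.singleton x, hL, fun a ha b hb hab => ?_⟩
    simp only [List.getLast?_singleton, Option.mem_some_iff] at ha
    subst ha
    by_contra h
    exact hx (by
      rw [hb, Option.some_inj]
      exact Prod.ext hab.symm (by revert h; cases x.2 <;> cases b.2 <;> simp))
  · rw [IsReduced, List.isChain_append]
    refine ⟨hL, .singleton y, fun a ha b hb hab => ?_⟩
    simp only [List.head?_cons, Option.mem_some_iff] at hb
    subst hb
    by_contra h
    exact hy (by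
      rw [ha, Option.some_inj]
      exact Prod.ext hab (by revert h; cases a.2 <;> cases y.2 <;> simp))

theorem isCyclicallyReduced_cons_append_self {x : α × Bool} (hL : IsReduced L)
    (hx : L.head? ≠ some (x.1, !x.2)) (hy : L.getLast? ≠ some (x.1, !x.2)) :
    IsCyclicallyReduced (x :: L ++ [x]) := by
  refine isCyclicallyReduced_cons_append_iff.2 ⟨?_, fun _ => rfl⟩
  rcases eq_or_ne L [] with rfl | hne
  · simp
  · exact isReduced_cons_append_singleton hL hne hx (by simpa using hy)

theorem getLast?_append_invRev_cons (l v : List (α × Bool)) (y : α × Bool) :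
    (l ++ invRev (y :: v)).getLast? = some (y.1, !y.2) := by
  simp [invRev, List.getLast?_append]

-- Every conjugate of a cyclically reduced `w` has a reduced word of this shape
-- (`isConjRotation_conj`); if that word is itself cyclically reduced, then `v = []`.
def IsConjRotation (w W : List (α × Bool)) : Prop :=
  ∃ v w', w' ~r w ∧ IsCyclicallyReduced w' ∧ W = v ++ w' ++ invRev v

variable [DecidableEq α]

theorem IsReduced.toWord_mk (h : IsReduced L) : (mk L).toWord = L := by
  rw [FreeGroup.toWord_mk, h.reduce_eq]

theorem toWord_conj_singleton {x : α × Bool} {g : FreeGroup α}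
    (h : IsReduced (x :: g.toWord ++ [(x.1, !x.2)])) :
    (mk [x] * g * (mk [x])⁻¹).toWord = x :: g.toWord ++ [(x.1, !x.2)] := by
  conv_lhs => rw [← mk_toWord (x := g), mk_singleton_inv, mul_mk, mul_mk]
  exact h.toWord_mk

theorem isConjRotation_conj_singleton_of_isCyclicallyReduced {w : List (α × Bool)}
    {g : FreeGroup α} (hg : IsCyclicallyReduced g.toWord) (hrot : g.toWord ~r w)
    (x : α × Bool) : IsConjRotation w (mk [x] * g * (mk [x])⁻¹).toWord := by
  rcases hW : g.toWord with _ | ⟨z, t⟩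
  · rw [toWord_eq_nil_iff.1 hW, mul_one, mul_inv_cancel, toWord_one]
    exact ⟨[], [], hW ▸ hrot, .nil, rfl⟩
  rw [hW] at hg hrot
  by_cases hz : z = (x.1, !x.2)
  · have hrot' : t ++ [z] ~r z :: t := List.isRotated_concat z t
    have hred := (hg.of_isRotated hrot'.symm).isReduced
    refine ⟨[], t ++ [z], hrot'.trans hrot, hg.of_isRotated hrot'.symm, ?_⟩
    have hg' : g = (mk [x])⁻¹ * mk t := by
      rw [← mk_toWord (x := g), hW, hz, mk_singleton_inv, mul_mk]; rfl
    rw [hg', show mk [x] * ((mk [x])⁻¹ * mk t) * (mk [x])⁻¹ = mk t * (mk [x])⁻¹ by group,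
      mk_singleton_inv, mul_mk, ← hz, hred.toWord_mk]
    simp
  by_cases hl : (z :: t).getLast? = some x
  · obtain ⟨t', ht'⟩ := List.getLast?_eq_some_iff.mp hl
    have hrot' : x :: t' ~r z :: t := ht' ▸ (List.isRotated_concat x t').symm
    have hred := (hg.of_isRotated hrot'.symm).isReduced
    refine ⟨[], x :: t', hrot'.trans hrot, hg.of_isRotated hrot'.symm, ?_⟩
    have hg' : g = mk t' * mk [x] := by rw [← mk_toWord (x := g), hW, ht', mul_mk]
    rw [hg', show mk [x] * (mk t' * mk [x]) * (mk [x])⁻¹ = mk [x] * mk t' by group,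
      mul_mk, List.singleton_append, hred.toWord_mk]
    simp
  refine ⟨[x], z :: t, hrot, hg, ?_⟩
  rw [toWord_conj_singleton, hW]
  · simp [invRev]
  · refine hW ▸ isReduced_cons_append_singleton hg.isReduced (List.cons_ne_nil z t) ?_ ?_
    · simpa using hz
    · simpa using hl

theorem IsConjRotation.conj_singleton {w : List (α × Bool)} {g : FreeGroup α}
    (h : IsConjRotation w g.toWord) (x : α × Bool) :
    IsConjRotation w (mk [x] * g * (mk [x])⁻¹).toWord := by
  obtain ⟨_ | ⟨y, v₀⟩, w', hrot, hcyc, hg⟩ := h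
  · simp only [invRev_empty, List.nil_append, List.append_nil] at hg
    exact isConjRotation_conj_singleton_of_isCyclicallyReduced (hg ▸ hcyc) (hg ▸ hrot) x
  by_cases hy : y = (x.1, !x.2)
  · refine ⟨v₀, w', hrot, hcyc, ?_⟩
    have : g = (mk [x])⁻¹ * mk (v₀ ++ w' ++ invRev v₀) * mk [x] := by
      rw [← mk_toWord (x := g), hg, hy, mk_singleton_inv, mul_mk, mul_mk]
      simp [invRev]
    rw [this, show ∀ m, mk [x] * ((mk [x])⁻¹ * m * mk [x]) * (mk [x])⁻¹ = m by intro; group,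
      IsReduced.toWord_mk ((isReduced_toWord (x := g)).infix ⟨[y], [(y.1, !y.2)], ?_⟩)]
    simp [hg, invRev]
  · refine ⟨x :: y :: v₀, w', hrot, hcyc, ?_⟩
    rw [toWord_conj_singleton]
    · simp [hg, invRev]
    · refine isReduced_cons_append_singleton isReduced_toWord (by simp [hg]) ?_ ?_
      · simpa [hg] using hy
      · rw [hg, getLast?_append_invRev_cons, Ne, Option.some_inj]
        intro hyx
        exact hy (by simpa [Prod.ext_iff] using hyx)

theorem isConjRotation_conj {w : List (α × Bool)} (hw : IsCyclicallyReduced w) (c : FreeGroup α) :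
    IsConjRotation w (c * mk w * c⁻¹).toWord := by
  rw [← mk_toWord (x := c)]
  induction c.toWord with
  | nil =>
    rw [← one_eq_mk, one_mul, inv_one, mul_one, hw.isReduced.toWord_mk]
    exact ⟨[], w, .refl w, hw, by simp⟩
  | cons x l ih =>
    rw [← List.singleton_append, ← mul_mk, mul_inv_rev,
      show ∀ a b m : FreeGroup α, a * b * m * (b⁻¹ * a⁻¹) = a * (b * m * b⁻¹) * a⁻¹ by
        intros; group]
    exact ih.conj_singleton x

theorem isRotated_toWord_of_isConj {g g' : FreeGroup α} (hg : IsCyclicallyReduced g.toWord)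
    (hg' : IsCyclicallyReduced g'.toWord) (h : IsConj g g') : g'.toWord ~r g.toWord := by
  obtain ⟨c, rfl⟩ := isConj_iff.mp h
  obtain ⟨v, w', hrot, -, hW⟩ := mk_toWord (x := g) ▸ isConjRotation_conj hg c
  rcases v with _ | ⟨y, v₀⟩
  · simpa [hW] using hrot
  · refine absurd (hg'.2 (y.1, !y.2) ?_ y (by simp [hW]) rfl) (by simp)
    rw [hW, getLast?_append_invRev_cons]
    rfl

theorem setOf_isConj_subset {g : FreeGroup α} (hg : IsCyclicallyReduced g.toWord) :
    {a | IsCyclicallyReduced a.toWord ∧ IsConj g a} ⊆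
      ↑(g.toWord.cyclicPermutations.map mk).toFinset := by
  rintro a ⟨ha, hga⟩
  rw [Finset.mem_coe, List.mem_toFinset, ← mk_toWord (x := a)]
  exact List.mem_map_of_mem
    (List.mem_cyclicPermutations_iff.2 (isRotated_toWord_of_isConj hg ha hga))

end FreeGroup

section Growth

open Filter Topology Real Asymptotics

variable {f u v : ℝ → ℝ} {h : ℝ}

theorem tendsto_log_affine_div_atTop {a : ℝ} (ha : 0 < a) (b : ℝ) :
    Tendsto (fun R => log (a * R + b) / R) atTop (𝓝 0) := by
  have hφ : Tendsto (fun R : ℝ => a * R + b) atTop atTop :=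
    tendsto_atTop_add_const_right _ b (tendsto_id.const_mul_atTop ha)
  have hO : (fun R : ℝ => a * R + b) =O[atTop] id :=
    ((isBigO_refl _ _).const_mul_left a).add (isLittleO_const_id_atTop b).isBigO
  exact ((isLittleO_log_id_atTop.comp_tendsto hφ).trans_isBigO hO).tendsto_div_nhds_zero

theorem tendsto_add_const_div_atTop (c : ℝ) : Tendsto (fun R => (R + c) / R) atTop (𝓝 1) := by
  have := (tendsto_const_nhds (x := (1 : ℝ))).add (tendsto_const_nhds (x := c).div_atTop tendsto_id)
  rw [add_zero] at this
  refine this.congr' ?_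
  filter_upwards [eventually_ne_atTop 0] with R hR
  simp only [id]
  field_simp

theorem tendsto_log_comp_add_div (hf : Tendsto (fun R => log (f R) / R) atTop (𝓝 h)) (c : ℝ) :
    Tendsto (fun R => log (f (R + c)) / R) atTop (𝓝 h) := by
  have := (hf.comp (tendsto_atTop_add_const_right _ c tendsto_id)).mul
    (tendsto_add_const_div_atTop c)
  rw [mul_one] at this
  refine this.congr' ?_
  filter_upwards [eventually_gt_atTop (-c)] with R hR
  simp only [Function.comp_apply, id]
  field_simp [show R + c ≠ 0 by linarith]

theorem tendsto_log_div_affine_div (hf : Tendsto (fun R => log (f R) / R) atTop (𝓝 h))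
    (hf₀ : ∀ᶠ R in atTop, f R ≠ 0) {a : ℝ} (ha : 0 < a) (b : ℝ) :
    Tendsto (fun R => log (f R / (a * R + b)) / R) atTop (𝓝 h) := by
  have := hf.sub (tendsto_log_affine_div_atTop ha b)
  rw [sub_zero] at this
  refine this.congr' ?_
  filter_upwards [hf₀, eventually_gt_atTop (-b / a)] with R hR hRb
  rw [log_div hR, sub_div]
  have : 0 < a * R + b := by rw [div_lt_iff₀ ha] at hRb; linarith
  exact this.ne'

theorem tendsto_log_div_of_le_of_le (hf : Tendsto (fun R => log (f R) / R) atTop (𝓝 h))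
    (hv : Tendsto (fun R => log (v R) / R) atTop (𝓝 h)) (hf₀ : ∀ᶠ R in atTop, 0 < f R)
    (hfu : ∀ᶠ R in atTop, f R ≤ u R) (huv : ∀ᶠ R in atTop, u R ≤ v R) :
    Tendsto (fun R => log (u R) / R) atTop (𝓝 h) := by
  refine tendsto_of_tendsto_of_tendsto_of_le_of_le' hf hv ?_ ?_
  · filter_upwards [hf₀, hfu, eventually_gt_atTop 0] with R h₀ h₁ hR
    exact div_le_div_of_nonneg_right (log_le_log h₀ h₁) hR.le
  · filter_upwards [hf₀, hfu, huv, eventually_gt_atTop 0] with R h₀ h₁ h₂ hR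
    exact div_le_div_of_nonneg_right (log_le_log (h₀.trans_le h₁) h₂) hR.le

end Growth

namespace McShane

open FreeGroup

variable {k : ℕ} (L : Fin k → ℝ)

theorem isCyclicallyReduced_iff {g : FreeGroup (Fin k)} :
    IsCyclicallyReduced g ↔ FreeGroup.IsCyclicallyReduced g.toWord := by
  refine ⟨fun h => ⟨isReduced_toWord, fun a ha b hb hab => ?_⟩, fun h x hx y hy hxy => ?_⟩
  · by_contra hne
    exact h b hb a ha ⟨hab.symm, by revert hne; cases a.2 <;> cases b.2 <;> simp⟩
  · have := h.2 y hy x hx hxy.1.symm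
    rw [hxy.2] at this
    cases y.2 <;> simp at this

theorem wlen_mk_of_isReduced {W : List (Fin k × Bool)} (hW : IsReduced W) :
    wlen L (mk W) = (W.map fun x => L x.1).sum := by
  rw [wlen, hW.toWord_mk]

theorem wlen_nonneg (hL : ∀ i, 0 ≤ L i) (g : FreeGroup (Fin k)) : 0 ≤ wlen L g :=
  List.sum_nonneg fun _ hx => by
    obtain ⟨x, -, rfl⟩ := List.mem_map.mp hx
    exact hL x.1

theorem mul_length_le_wlen {ε : ℝ} (hεL : ∀ i, ε ≤ L i) (g : FreeGroup (Fin k)) :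
    ε * g.toWord.length ≤ wlen L g := by
  calc ε * g.toWord.length = (g.toWord.map fun _ => ε).sum := by simp [mul_comm]
    _ ≤ wlen L g := List.sum_le_sum fun x _ => hεL x.1

theorem length_toWord_le_floor {ε R : ℝ} (hε : 0 < ε) (hεL : ∀ i, ε ≤ L i)
    {g : FreeGroup (Fin k)} (hg : wlen L g ≤ R) : g.toWord.length ≤ ⌊R / ε⌋₊ :=
  Nat.le_floor ((le_div_iff₀' hε).2 ((mul_length_le_wlen L hεL g).trans hg))

theorem finite_setOf_wlen_le {ε : ℝ} (hε : 0 < ε) (hεL : ∀ i, ε ≤ L i) (R : ℝ) :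
    {g : FreeGroup (Fin k) | wlen L g ≤ R}.Finite :=
  ((List.finite_length_le _ ⌊R / ε⌋₊).preimage toWord_injective.injOn).subset
    fun _ hg => length_toWord_le_floor L hε hεL hg

theorem hlen_mk_le_wlen (hL : ∀ i, 0 ≤ L i) (g : FreeGroup (Fin k)) :
    hlen L (ConjClasses.mk g) ≤ wlen L g :=
  csInf_le ⟨0, by rintro _ ⟨h, -, rfl⟩; exact wlen_nonneg L hL h⟩
    ⟨g, ConjClasses.mem_carrier_mk, rfl⟩

theorem exists_mk_eq_wlen_lt {c : ConjClasses (FreeGroup (Fin k))} {R : ℝ} (hc : hlen L c ≤ R) :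
    ∃ g, ConjClasses.mk g = c ∧ wlen L g < R + 1 := by
  obtain ⟨g₀, rfl⟩ := ConjClasses.exists_rep c
  obtain ⟨_, ⟨g, hg, rfl⟩, hlt⟩ :=
    exists_lt_of_csInf_lt (s := wlen L '' (ConjClasses.mk g₀).carrier)
      ⟨_, g₀, ConjClasses.mem_carrier_mk, rfl⟩ (hc.trans_lt (lt_add_one R))
  exact ⟨g, ConjClasses.mem_carrier_iff_mk_eq.mp hg, hlt⟩

noncomputable def numElems (R : ℝ) : ℕ := Nat.card {g : FreeGroup (Fin k) // wlen L g ≤ R}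

noncomputable def numCycRed (R : ℝ) : ℕ :=
  Nat.card {g : FreeGroup (Fin k) // IsCyclicallyReduced g ∧ wlen L g ≤ R}

noncomputable def numConjClasses (R : ℝ) : ℕ :=
  Nat.card {c : ConjClasses (FreeGroup (Fin k)) // c ≠ 1 ∧ hlen L c ≤ R}

variable {L} {ε : ℝ}

theorem numElems_pos (hε : 0 < ε) (hεL : ∀ i, ε ≤ L i) {R : ℝ} (hR : 0 ≤ R) :
    0 < numElems L R :=
  Nat.card_pos_iff.2 ⟨⟨1, by simpa [wlen] using hR⟩, (finite_setOf_wlen_le L hε hεL R).to_subtype⟩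

theorem numCycRed_pos (hε : 0 < ε) (hεL : ∀ i, ε ≤ L i) {R : ℝ} (hR : 0 ≤ R) :
    0 < numCycRed L R :=
  Nat.card_pos_iff.2 ⟨⟨1, by simp [IsCyclicallyReduced], by simpa [wlen] using hR⟩,
    ((finite_setOf_wlen_le L hε hεL R).subset fun _ (hg : _ ∧ _) => hg.2).to_subtype⟩

theorem numCycRed_le_numElems (hε : 0 < ε) (hεL : ∀ i, ε ≤ L i) (R : ℝ) :
    numCycRed L R ≤ numElems L R :=
  Nat.card_mono (finite_setOf_wlen_le L hε hεL R) fun _ hg => hg.2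

theorem exists_letter_ne (hk : 2 ≤ k) (W : List (Fin k × Bool)) :
    ∃ x : Fin k × Bool, W.head? ≠ some (x.1, !x.2) ∧ W.getLast? ≠ some (x.1, !x.2) := by
  -- the inverses of `a₀, a₀⁻¹, a₁` are distinct, and at most two letters are excluded
  by_contra! h
  have h₁ := h (⟨0, by omega⟩, true)
  have h₂ := h (⟨0, by omega⟩, false)
  have h₃ := h (⟨1, by omega⟩, true)
  clear h
  by_cases ha : W.head? = some (⟨0, by omega⟩, false) <;> simp_all

theorem numElems_le_numCycRed_add (hk : 2 ≤ k) (hε : 0 < ε) (hεL : ∀ i, ε ≤ L i) (R : ℝ) :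
    numElems L R ≤ numCycRed L (R + 2 * ∑ i, L i) := by
  choose ℓ hℓ using exists_letter_ne hk
  have : Finite {g : FreeGroup (Fin k) // IsCyclicallyReduced g ∧ wlen L g ≤ R + 2 * ∑ i, L i} :=
    ((finite_setOf_wlen_le L hε hεL _).subset fun _ (hg : _ ∧ _) => hg.2).to_subtype
  have hcyc (g : FreeGroup (Fin k)) :
      FreeGroup.IsCyclicallyReduced (ℓ g.toWord :: g.toWord ++ [ℓ g.toWord]) :=
    isCyclicallyReduced_cons_append_self isReduced_toWord (hℓ _).1 (hℓ _).2
  refine Nat.card_le_card_of_injective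
    (fun g => ⟨mk (ℓ g.1.toWord :: g.1.toWord ++ [ℓ g.1.toWord]), ?_, ?_⟩) fun g₁ g₂ h => ?_
  · rw [isCyclicallyReduced_iff, (hcyc g).isReduced.toWord_mk]
    exact hcyc g
  · rw [wlen_mk_of_isReduced L (hcyc g).isReduced]
    have hℓ : L (ℓ g.1.toWord).1 ≤ ∑ i, L i :=
      Finset.single_le_sum (fun i _ => (hε.trans_le (hεL i)).le) (Finset.mem_univ _)
    have hg : (g.1.toWord.map fun x => L x.1).sum ≤ R := g.2
    simp only [List.cons_append, List.map_cons, List.map_append, List.sum_cons,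
      List.sum_append, List.map_nil, List.sum_nil]
    linarith
  · have h := congrArg (fun g => g.1.toWord) h
    simp only at h
    rw [(hcyc _).isReduced.toWord_mk, (hcyc _).isReduced.toWord_mk, List.cons_append,
      List.cons_append, List.cons_eq_cons] at h
    obtain ⟨h₁, h₂⟩ := h
    rw [h₁] at h₂
    exact Subtype.ext (toWord_injective (List.append_cancel_right h₂))

theorem setOf_hlen_le_subset_image (R : ℝ) :
    {c : ConjClasses (FreeGroup (Fin k)) | hlen L c ≤ R} ⊆
      ConjClasses.mk '' {g | wlen L g ≤ R + 1} := fun _ hc =>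
  let ⟨g, hg, hlt⟩ := exists_mk_eq_wlen_lt L hc
  ⟨g, hlt.le, hg⟩

theorem finite_setOf_hlen_le (hε : 0 < ε) (hεL : ∀ i, ε ≤ L i) (R : ℝ) :
    {c : ConjClasses (FreeGroup (Fin k)) | hlen L c ≤ R}.Finite :=
  ((finite_setOf_wlen_le L hε hεL (R + 1)).image ConjClasses.mk).subset
    (setOf_hlen_le_subset_image R)

theorem numConjClasses_le_numElems_add_one (hε : 0 < ε) (hεL : ∀ i, ε ≤ L i) (R : ℝ) :
    numConjClasses L R ≤ numElems L (R + 1) :=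
  have hfin := finite_setOf_wlen_le L hε hεL (R + 1)
  (Nat.card_mono (hfin.image _) fun _ hc => setOf_hlen_le_subset_image R hc.2).trans
    (Nat.card_image_le hfin)

theorem ncard_setOf_hlen_le_le (hε : 0 < ε) (hεL : ∀ i, ε ≤ L i) (R : ℝ) :
    {c : ConjClasses (FreeGroup (Fin k)) | hlen L c ≤ R}.ncard ≤ numConjClasses L R + 1 :=
  calc _ ≤ (insert 1 {c | c ≠ 1 ∧ hlen L c ≤ R}).ncard :=
        Set.ncard_le_ncard (fun c hc => (em (c = 1)).imp id fun h => ⟨h, hc⟩)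
          (((finite_setOf_hlen_le hε hεL R).subset fun _ hc => hc.2).insert 1)
    _ ≤ numConjClasses L R + 1 := Set.ncard_insert_le _ _

theorem card_filter_mk_eq_le [DecidableEq (ConjClasses (FreeGroup (Fin k)))] (hε : 0 < ε)
    (hεL : ∀ i, ε ≤ L i) {R : ℝ} {s : Finset (FreeGroup (Fin k))}
    (hs : ∀ g ∈ s, IsCyclicallyReduced g ∧ wlen L g ≤ R) (c : ConjClasses (FreeGroup (Fin k))) :
    (s.filter fun g => ConjClasses.mk g = c).card ≤ ⌊R / ε⌋₊ + 1 := by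
  obtain h | ⟨g₀, hg₀⟩ := (s.filter fun g => ConjClasses.mk g = c).eq_empty_or_nonempty
  · simp [h]
  obtain ⟨hs₀, rfl⟩ := Finset.mem_filter.1 hg₀
  have hcyc₀ := isCyclicallyReduced_iff.1 (hs g₀ hs₀).1
  calc _ ≤ (g₀.toWord.cyclicPermutations.map mk).toFinset.card := by
        refine Finset.card_le_card fun g hg => ?_
        obtain ⟨hg, hgc⟩ := Finset.mem_filter.1 hg
        exact setOf_isConj_subset hcyc₀
          ⟨isCyclicallyReduced_iff.1 (hs g hg).1, ConjClasses.mk_eq_mk_iff_isConj.1 hgc.symm⟩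
    _ ≤ g₀.toWord.length + 1 :=
        (List.toFinset_card_le _).trans ((List.length_map _).trans_le
          (List.length_cyclicPermutations_le _))
    _ ≤ ⌊R / ε⌋₊ + 1 := by gcongr; exact length_toWord_le_floor L hε hεL (hs g₀ hs₀).2

theorem numCycRed_le_mul (hε : 0 < ε) (hεL : ∀ i, ε ≤ L i) (R : ℝ) :
    numCycRed L R ≤ (⌊R / ε⌋₊ + 1) * (numConjClasses L R + 1) := by
  classical
  have hS := (finite_setOf_wlen_le L hε hεL R).subset
    (t := {g | IsCyclicallyReduced g ∧ wlen L g ≤ R}) fun _ hg => hg.2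
  have hT := finite_setOf_hlen_le hε hεL R
  have hmaps : ∀ g ∈ hS.toFinset, ConjClasses.mk g ∈ hT.toFinset := fun g hg =>
    hT.mem_toFinset.2 <| (hlen_mk_le_wlen L (fun i => (hε.trans_le (hεL i)).le) g).trans
      (hS.mem_toFinset.1 hg).2
  calc numCycRed L R = hS.toFinset.card := Set.ncard_eq_toFinset_card _ hS
    _ ≤ (⌊R / ε⌋₊ + 1) * hT.toFinset.card :=
      Finset.card_le_mul_card_image_of_maps_to hmaps _ fun c _ =>
        card_filter_mk_eq_le hε hεL (fun _ hg => hS.mem_toFinset.1 hg) c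
    _ ≤ (⌊R / ε⌋₊ + 1) * (numConjClasses L R + 1) := by
      rw [← Set.ncard_eq_toFinset_card _ hT]
      gcongr
      exact ncard_setOf_hlen_le_le hε hεL R

theorem numConjClasses_pos (hε : 0 < ε) (hεL : ∀ i, ε ≤ L i) {i : Fin k} {R : ℝ} (hR : L i ≤ R) :
    0 < numConjClasses L R := by
  refine Nat.card_pos_iff.2 ⟨⟨ConjClasses.mk (of i), ?_, ?_⟩,
    ((finite_setOf_hlen_le hε hεL R).subset fun _ hc => hc.2).to_subtype⟩
  · rw [Ne, ConjClasses.one_eq_mk_one, ConjClasses.mk_eq_mk_iff_isConj, isConj_comm,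
      isConj_one_right]
    exact of_ne_one i
  · refine (hlen_mk_le_wlen L (fun i => (hε.trans_le (hεL i)).le) _).trans ?_
    simpa [wlen] using hR

theorem numCycRed_div_le_numConjClasses (hε : 0 < ε) (hεL : ∀ i, ε ≤ L i) {i : Fin k} {R : ℝ}
    (hR : L i ≤ R) : (numCycRed L R : ℝ) / (2 / ε * R + 2) ≤ numConjClasses L R := by
  have hR₀ : 0 ≤ R := (hε.trans_le (hεL i)).le.trans hR
  have hcyc : (numCycRed L R : ℝ) ≤ (⌊R / ε⌋₊ + 1) * (numConjClasses L R + 1) := by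
    exact_mod_cast numCycRed_le_mul hε hεL R
  have hfloor : (⌊R / ε⌋₊ : ℝ) ≤ R / ε := Nat.floor_le (div_nonneg hR₀ hε.le)
  have hconj : (1 : ℝ) ≤ numConjClasses L R := by exact_mod_cast numConjClasses_pos hε hεL hR
  rw [div_le_iff₀ (by positivity)]
  calc (numCycRed L R : ℝ) ≤ (R / ε + 1) * (numConjClasses L R + numConjClasses L R) := by
        refine hcyc.trans (mul_le_mul (by linarith) (by linarith) (by positivity) (by positivity))
    _ = numConjClasses L R * (2 / ε * R + 2) := by ring

open Filter Topology Real

theorem tendsto_log_numCycRed_div (hk : 2 ≤ k) (hε : 0 < ε) (hεL : ∀ i, ε ≤ L i) {h : ℝ}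
    (hall : Tendsto (fun R => log (numElems L R) / R) atTop (𝓝 h)) :
    Tendsto (fun R => log (numCycRed L R) / R) atTop (𝓝 h) := by
  refine tendsto_log_div_of_le_of_le (tendsto_log_comp_add_div hall (-(2 * ∑ i, L i))) hall ?_
    (.of_forall fun R => ?_) (.of_forall fun R => by exact_mod_cast numCycRed_le_numElems hε hεL R)
  · filter_upwards [eventually_ge_atTop (2 * ∑ i, L i)] with R hR
    have hR' : 0 ≤ R + -(2 * ∑ i, L i) := by linarith
    exact_mod_cast numElems_pos hε hεL hR'
  · have := numElems_le_numCycRed_add hk hε hεL (R + -(2 * ∑ i, L i))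
    rw [neg_add_cancel_right] at this
    exact_mod_cast this

theorem tendsto_log_numConjClasses_div (hε : 0 < ε) (hεL : ∀ i, ε ≤ L i) (i : Fin k) {h : ℝ}
    (hall : Tendsto (fun R => log (numElems L R) / R) atTop (𝓝 h))
    (hcyc : Tendsto (fun R => log (numCycRed L R) / R) atTop (𝓝 h)) :
    Tendsto (fun R => log (numConjClasses L R) / R) atTop (𝓝 h) := by
  refine tendsto_log_div_of_le_of_le
    (tendsto_log_div_affine_div hcyc ?_ (div_pos two_pos hε) 2) (tendsto_log_comp_add_div hall 1)
    ?_ ?_ (.of_forall fun R => by exact_mod_cast numConjClasses_le_numElems_add_one hε hεL R)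
  · filter_upwards [eventually_ge_atTop 0] with R hR
    exact_mod_cast (numCycRed_pos hε hεL hR).ne'
  · filter_upwards [eventually_ge_atTop 0] with R hR
    exact div_pos (by exact_mod_cast numCycRed_pos hε hεL hR) (by positivity)
  · filter_upwards [eventually_ge_atTop (L i)] with R hR
    exact numCycRed_div_le_numConjClasses hε hεL hR

/-- Proposition 2.2: for a metric structure `L` (positive edge lengths) with volume
entropy `h`, the exponential growth rates of cyclically reduced elements and of
nontrivial conjugacy classes both exist and equal `h`. -/
theorem mcshane_stmt6 (k : ℕ) (hk : 2 ≤ k) (L : Fin k → ℝ) (hL : ∀ i, 0 < L i)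
    (h : ℝ)
    (hent : Tendsto (fun R : ℝ =>
        Real.log (Nat.card {g : FreeGroup (Fin k) // wlen L g ≤ R}) / R) atTop (𝓝 h)) :
    Tendsto (fun R : ℝ =>
        Real.log (Nat.card {g : FreeGroup (Fin k) // IsCyclicallyReduced g ∧ wlen L g ≤ R}) / R)
      atTop (𝓝 h) ∧
    Tendsto (fun R : ℝ =>
        Real.log (Nat.card {c : ConjClasses (FreeGroup (Fin k)) // c ≠ 1 ∧ hlen L c ≤ R}) / R)
      atTop (𝓝 h) := by
  have : Nonempty (Fin k) := ⟨⟨0, by omega⟩⟩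
  obtain ⟨i₀, hi₀⟩ := Finite.exists_min L
  have hall : Tendsto (fun R => log (numElems L R) / R) atTop (𝓝 h) := hent
  have hcyc := tendsto_log_numCycRed_div hk (hL i₀) hi₀ hall
  exact ⟨hcyc, tendsto_log_numConjClasses_div (hL i₀) hi₀ i₀ hall hcyc⟩

end McShane
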